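/- arXiv:2506.02145 — 6 statements merged into one kernel-verified Lean document; each statement's English description precedes it below -/
import Mathlib

section
/- For every d ≥ 2 and every real number c > d, there exists a linear map Φ : ℂ^{d×d} → ℂ^{d×d} that is 2-positive and trace-preserving and satisfies tr(Φ) > c·min Re σ(Φ) + (d² − c). In other words, the constant d in the bound tr(Φ) ≤ d·min Re σ(Φ) + (d² − d) cannot be replaced by any larger constant c. -/
open Matrix
open scoped ComplexOrder

/-- A linear map on `d × d` complex matrices is *positive* if it sends positive semidefinite
matrices to positive semidefinite matrices. -/
def IsPosMap {d : ℕ} (Φ : Matrix (Fin d) (Fin d) ℂ → Matrix (Fin d) (Fin d) ℂ) : Prop :=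
  ∀ A : Matrix (Fin d) (Fin d) ℂ, A.PosSemidef → (Φ A).PosSemidef

/-- A map on `d × d` complex matrices is *2-positive* if it sends every positive semidefinite
`2d × 2d` block matrix `[[A, B], [C, D]]` to a positive semidefinite block matrix
`[[Φ A, Φ B], [Φ C, Φ D]]`. -/
def IsTwoPos {d : ℕ} (Φ : Matrix (Fin d) (Fin d) ℂ → Matrix (Fin d) (Fin d) ℂ) : Prop :=
  ∀ A B C D : Matrix (Fin d) (Fin d) ℂ,
    (Matrix.fromBlocks A B C D).PosSemidef →
    (Matrix.fromBlocks (Φ A) (Φ B) (Φ C) (Φ D)).PosSemidef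

/-- A map on matrices is *trace-preserving* if `tr (Φ X) = tr X` for all `X`. -/
def IsTracePreserving {d : ℕ} (Φ : Matrix (Fin d) (Fin d) ℂ → Matrix (Fin d) (Fin d) ℂ) : Prop :=
  ∀ X : Matrix (Fin d) (Fin d) ℂ, (Φ X).trace = X.trace

/-!
For a unit vector `u` of phases, conjugation `X ↦ U X U*` by `U = diagonal u` is the Schur
multiplier by the rank-one positive matrix `u u*`: it is completely positive and trace-preserving,
its eigenvalues are the products `u i * conj (u j)`, and its trace is `|∑ i, u i|²`. Taking
`u = (z, conj z, 1, …, 1)` with `|z| = 1` and `Re z = a` gives trace `(2a + d - 2)²` and the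
eigenvalue `z²` of real part `2a² - 1`. The two sides of `(2a + d - 2)² ≤ c (2a² - 1) + d² - c`
agree at `a = 1`, where their slopes are `4d` and `4c`, so for `c > d` the inequality fails for
`a` slightly below `1`.
-/

section SchurMultiplier

variable {n : Type*}

noncomputable def schurMultiplier (P : Matrix n n ℂ) : Module.End ℂ (Matrix n n ℂ) where
  toFun X := P ⊙ X
  map_add' X Y := hadamard_add P X Y
  map_smul' c X := hadamard_smul P X c

@[simp]
theorem schurMultiplier_apply (P X : Matrix n n ℂ) : schurMultiplier P X = P ⊙ X := rfl

theorem fromBlocks_hadamard_fromBlocks {l m α : Type*} [Mul α]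
    (A B C D A' B' C' D' : Matrix l m α) :
    fromBlocks A B C D ⊙ fromBlocks A' B' C' D' =
      fromBlocks (A ⊙ A') (B ⊙ B') (C ⊙ C') (D ⊙ D') := by
  ext (i | i) (j | j) <;> rfl

theorem Matrix.PosSemidef.fromBlocks_self {P : Matrix n n ℂ} (hP : P.PosSemidef) :
    (fromBlocks P P P P).PosSemidef := by
  have h : fromBlocks P P P P = P.submatrix (Sum.elim id id) (Sum.elim id id) := by
    ext (i | i) (j | j) <;> rfl
  exact h ▸ hP.submatrix _

theorem isTwoPos_schurMultiplier {d : ℕ} {P : Matrix (Fin d) (Fin d) ℂ} (hP : P.PosSemidef) :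
    IsTwoPos (schurMultiplier P) := fun A B C D hM => by
  simpa only [schurMultiplier_apply, fromBlocks_hadamard_fromBlocks] using
    hP.fromBlocks_self.hadamard hM

theorem isTracePreserving_schurMultiplier {d : ℕ} {P : Matrix (Fin d) (Fin d) ℂ}
    (hP : ∀ i, P i i = 1) : IsTracePreserving (schurMultiplier P) := fun X => by
  simp [trace, hP]

variable [DecidableEq n]

theorem schurMultiplier_single (P : Matrix n n ℂ) (i j : n) :
    schurMultiplier P (single i j 1) = P i j • single i j 1 := by
  ext k l
  by_cases hk : i = k <;> by_cases hl : j = l <;> simp [single, hk, hl]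

variable [Fintype n]

theorem mem_spectrum_schurMultiplier (P : Matrix n n ℂ) (i j : n) :
    P i j ∈ spectrum ℂ (schurMultiplier P) := by
  rw [← Module.End.hasEigenvalue_iff_mem_spectrum]
  refine Module.End.hasEigenvalue_of_hasEigenvector
    ⟨Module.End.mem_eigenspace_iff.mpr (schurMultiplier_single P i j), ?_⟩
  simpa only [stdBasis_eq_single] using (stdBasis ℂ n n).ne_zero (i, j)

theorem trace_schurMultiplier (P : Matrix n n ℂ) :
    LinearMap.trace ℂ _ (schurMultiplier P) = ∑ i, ∑ j, P i j := by
  rw [LinearMap.trace_eq_matrix_trace ℂ (stdBasis ℂ n n), trace, Fintype.sum_prod_type]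
  refine Finset.sum_congr rfl fun i _ => Finset.sum_congr rfl fun j _ => ?_
  rw [diag_apply, LinearMap.toMatrix_apply, stdBasis_eq_single, schurMultiplier_single,
    ← stdBasis_eq_single, map_smul, Module.Basis.repr_self]
  simp

theorem trace_schurMultiplier_vecMulVec (u : n → ℂ) :
    LinearMap.trace ℂ _ (schurMultiplier (vecMulVec u (star u))) =
      (∑ i, u i) * star (∑ i, u i) := by
  simp only [trace_schurMultiplier, vecMulVec_apply, Pi.star_apply, star_sum, Finset.sum_mul_sum]

end SchurMultiplier

section PhaseVector

noncomputable def phaseVector (z : ℂ) (k : ℕ) : Fin (k + 2) → ℂ :=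
  Fin.cons z (Fin.cons (star z) 1)

variable {z : ℂ} {k : ℕ}

theorem phaseVector_mul_star (hz : ‖z‖ = 1) (i : Fin (k + 2)) :
    phaseVector z k i * star (phaseVector z k i) = 1 := by
  have hz' : z * star z = 1 := by
    rw [Complex.star_def, Complex.mul_conj, Complex.normSq_eq_norm_sq, hz]
    simp
  refine Fin.cases hz' (Fin.cases ?_ fun _ => ?_) i
  · simpa [phaseVector, mul_comm] using hz'
  · simp [phaseVector]

theorem sum_phaseVector (z : ℂ) (k : ℕ) :
    ∑ i, phaseVector z k i = ((2 * z.re + k : ℝ) : ℂ) := by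
  simp [phaseVector, Fin.sum_univ_succ, ← add_assoc, Complex.add_conj]

theorem re_phaseVector_zero_mul_star_one (hz : ‖z‖ = 1) :
    (phaseVector z k 0 * star (phaseVector z k 1)).re = 2 * z.re ^ 2 - 1 := by
  have h := Complex.normSq_eq_norm_sq z
  rw [hz, Complex.normSq_apply] at h
  simp only [phaseVector, Fin.cons_zero, Fin.cons_one, star_star, Complex.mul_re]
  linear_combination -h

end PhaseVector

theorem exists_mem_Icc_bound_lt_sq {k c : ℝ} (hk : 0 ≤ k) (hc : k + 2 < c) :
    ∃ a ∈ Set.Icc (-1 : ℝ) 1, c * (2 * a ^ 2 - 1) + ((k + 2) ^ 2 - c) < (2 * a + k) ^ 2 := by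
  have hc2 : 0 < c - 2 := by linarith
  -- makes `(c - 2) (1 - a) = c - (k + 2)`, so that the defect below is `2 (1 - a) (c - (k + 2))`
  set a : ℝ := k / (c - 2)
  have hca : a * (c - 2) = k := div_mul_cancel₀ _ hc2.ne'
  have ha0 : 0 ≤ a := div_nonneg hk hc2.le
  have ha1 : a < 1 := (div_lt_one hc2).2 (by linarith)
  refine ⟨a, ⟨by linarith, ha1.le⟩, ?_⟩
  clear_value a
  calc c * (2 * a ^ 2 - 1) + ((k + 2) ^ 2 - c)
      = (2 * a + k) ^ 2 - 2 * (1 - a) * (c - (k + 2)) := by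
        linear_combination 2 * (a - 1) * hca
    _ < (2 * a + k) ^ 2 := sub_lt_self _ (by nlinarith)

/-- The constant d in the bound tr(Φ) ≤ d·min Re σ(Φ) + (d² − d) is optimal: for every c > d
there is a 2-positive trace-preserving map violating the bound with c in place of d. -/
theorem exists_twoPos_tracePreserving_violating (d : ℕ) (hd : 2 ≤ d) (c : ℝ) (hc : (d : ℝ) < c) :
    ∃ Φ : Module.End ℂ (Matrix (Fin d) (Fin d) ℂ),
      IsTwoPos ⇑Φ ∧ IsTracePreserving ⇑Φ ∧
      (LinearMap.trace ℂ (Matrix (Fin d) (Fin d) ℂ) Φ).re >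
        c * sInf (Complex.re '' spectrum ℂ Φ) + ((d : ℝ) ^ 2 - c) := by
  obtain ⟨k, rfl⟩ : ∃ k, d = k + 2 := ⟨d - 2, by omega⟩
  push_cast at hc ⊢
  obtain ⟨a, ⟨ha₁, ha₂⟩, hbound⟩ := exists_mem_Icc_bound_lt_sq k.cast_nonneg hc
  set z : ℂ := Complex.exp (Real.arccos a * Complex.I)
  have hz : ‖z‖ = 1 := Complex.norm_exp_ofReal_mul_I _
  have hza : z.re = a := by rw [Complex.exp_ofReal_mul_I_re, Real.cos_arccos ha₁ ha₂]
  set u := phaseVector z k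
  set Φ := schurMultiplier (vecMulVec u (star u))
  refine ⟨Φ, isTwoPos_schurMultiplier (posSemidef_vecMulVec_self_star u),
    isTracePreserving_schurMultiplier fun i => phaseVector_mul_star hz i, ?_⟩
  have htrace : (LinearMap.trace ℂ _ Φ).re = (2 * a + k) ^ 2 := by
    rw [trace_schurMultiplier_vecMulVec, sum_phaseVector, hza, Complex.star_def,
      Complex.conj_ofReal, ← Complex.ofReal_mul, Complex.ofReal_re, sq]
  have hspec : sInf (Complex.re '' spectrum ℂ Φ) ≤ 2 * a ^ 2 - 1 :=
    csInf_le ((Module.End.finite_spectrum Φ).image _).bddBelow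
      ⟨_, mem_spectrum_schurMultiplier _ 0 1, hza ▸ re_phaseVector_zero_mul_star_one hz⟩
  rw [htrace, gt_iff_lt]
  calc c * sInf (Complex.re '' spectrum ℂ Φ) + ((k + 2) ^ 2 - c)
      ≤ c * (2 * a ^ 2 - 1) + ((k + 2) ^ 2 - c) := by gcongr; linarith
    _ < (2 * a + k) ^ 2 := hbound
end

section
/- Let d ≥ 1, let Φ : ℂ^{d×d} → ℂ^{d×d} be a 2-positive linear map, and let G = {g₁, …, g_d} be any orthonormal basis of ℂ^d. Then tr(Φ) ≤ d·tr(T_G), where T_G is the transition matrix of Φ with respect to G. -/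
open Matrix
open scoped ComplexOrder

/-- The transition matrix `T_G` of a map `Φ` with respect to a family `g` of vectors:
`(T_G)_{jk} = ⟨g j, Φ(|g k⟩⟨g k|) (g j)⟩`. -/
noncomputable def transMat {d : ℕ} (Φ : Matrix (Fin d) (Fin d) ℂ → Matrix (Fin d) (Fin d) ℂ)
    (g : Fin d → (Fin d → ℂ)) : Matrix (Fin d) (Fin d) ℂ :=
  Matrix.of fun j k =>
    star (g j) ⬝ᵥ (Φ (Matrix.vecMulVec (g k) (star (g k)))).mulVec (g j)

/-! In the orthonormal basis `|g j⟩⟨g k|` of matrix space, `tr Φ = ∑ j k, x j k` with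
`x j k = ⟨g j, Φ(|g j⟩⟨g k|) g k⟩`, while `tr T_G = ∑ j, x j j`. For each pair `j, k` the
`2 × 2` block matrix `[[|g j⟩⟨g j|, |g j⟩⟨g k|], [|g k⟩⟨g j|, |g k⟩⟨g k|]]` is the rank-one
positive matrix of `g j ⊕ g k`; 2-positivity keeps its image positive, and testing that image
against `g j ⊕ (-g k)` gives `Re (x j k + x k j) ≤ Re (x j j + x k k)`. Summing over all `j, k`
yields `2 Re tr Φ ≤ 2 d tr T_G`. -/

namespace Matrix

theorem vecMulVec_sumElim {l m n p α : Type*} [Mul α] (a : l → α) (b : m → α) (c : n → α)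
    (d : p → α) :
    vecMulVec (Sum.elim a b) (Sum.elim c d) =
      fromBlocks (vecMulVec a c) (vecMulVec a d) (vecMulVec b c) (vecMulVec b d) := by
  ext (i | i) (j | j) <;> rfl

variable {R n : Type*} [CommRing R] [StarRing R] [Fintype n]

theorem mul_single_one_mul_conjTranspose [DecidableEq n] (U : Matrix n n R) (i j : n) :
    U * single i j 1 * Uᴴ = vecMulVec (U.col i) (star (U.col j)) := by
  ext a b
  simp [mul_apply, single, vecMulVec_apply, conjTranspose_apply, Finset.sum_ite_eq, ite_and]

theorem conjTranspose_mul_mul_apply (U M : Matrix n n R) (i j : n) :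
    (Uᴴ * M * U) i j = star (U.col i) ⬝ᵥ M *ᵥ U.col j := by
  rw [mul_mul_apply]
  rfl

end Matrix

namespace LinearMap

open Matrix

variable {R n : Type*} [CommRing R] [Fintype n] [DecidableEq n]

theorem trace_eq_sum_single_apply {m : Type*} [Fintype m] [DecidableEq m]
    (Ψ : Module.End R (Matrix m n R)) :
    trace R _ Ψ = ∑ i, ∑ j, Ψ (Matrix.single i j 1) i j := by
  rw [trace_eq_matrix_trace R (stdBasis R m n), Matrix.trace, ← Finset.univ_product_univ,
    Finset.sum_product]
  simp only [diag_apply, toMatrix_apply, stdBasis_eq_single]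
  simp [stdBasis, ofLinearEquiv]

variable [StarRing R]

theorem trace_eq_sum_conj_single_of_mem_unitaryGroup (Φ : Module.End R (Matrix n n R))
    {U : Matrix n n R} (hU : U ∈ unitaryGroup n R) :
    trace R _ Φ = ∑ i, ∑ j, (Uᴴ * Φ (U * Matrix.single i j 1 * Uᴴ) * U) i j := by
  rw [← trace_conj' Φ (Unitary.conjStarAlgAut R _ (star ⟨U, hU⟩)).toAlgEquiv.toLinearEquiv,
    trace_eq_sum_single_apply]
  simp [star_eq_conjTranspose]

theorem trace_eq_sum_dotProduct_mulVec_vecMulVec (Φ : Module.End R (Matrix n n R))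
    (g : n → n → R) (hON : ∀ i j, star (g i) ⬝ᵥ g j = if i = j then (1 : R) else 0) :
    trace R _ Φ = ∑ j, ∑ k, star (g j) ⬝ᵥ Φ (vecMulVec (g j) (star (g k))) *ᵥ g k := by
  have hU : (of g)ᵀ ∈ unitaryGroup n R := by
    refine mem_unitaryGroup_iff'.2 (Matrix.ext fun i j => ?_)
    simpa [mul_apply, one_apply, dotProduct] using hON i j
  rw [trace_eq_sum_conj_single_of_mem_unitaryGroup Φ hU]
  simp only [mul_single_one_mul_conjTranspose, conjTranspose_mul_mul_apply]
  rfl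

end LinearMap

theorem IsTwoPos.re_cross_add_le {d : ℕ} {Φ : Matrix (Fin d) (Fin d) ℂ → Matrix (Fin d) (Fin d) ℂ}
    (hΦ : IsTwoPos Φ) (u v : Fin d → ℂ) :
    (star u ⬝ᵥ Φ (vecMulVec u (star v)) *ᵥ v).re + (star v ⬝ᵥ Φ (vecMulVec v (star u)) *ᵥ u).re ≤
      (star u ⬝ᵥ Φ (vecMulVec u (star u)) *ᵥ u).re +
        (star v ⬝ᵥ Φ (vecMulVec v (star v)) *ᵥ v).re := by
  have hblocks := posSemidef_vecMulVec_self_star (Sum.elim u v)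
  rw [Function.star_sumElim, vecMulVec_sumElim] at hblocks
  have h := ((hΦ _ _ _ _ hblocks).dotProduct_mulVec_nonneg (Sum.elim u (-v))).1
  simp only [Function.star_sumElim, fromBlocks_mulVec, sumElim_dotProduct_sumElim, mulVec_neg,
    Sum.elim_comp_inl, Sum.elim_comp_inr, dotProduct_add, dotProduct_neg, neg_dotProduct,
    star_neg, Complex.zero_re, Complex.add_re, Complex.neg_re] at h
  linarith

theorem Finset.sum_sum_le_card_mul_sum_of_add_le {ι α : Type*} [Fintype ι] [Field α]
    [LinearOrder α] [IsStrictOrderedRing α] (x : ι → ι → α) (t : ι → α)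
    (h : ∀ j k, x j k + x k j ≤ t j + t k) :
    ∑ j, ∑ k, x j k ≤ Fintype.card ι * ∑ j, t j := by
  have hsum := sum_le_sum fun j (_ : j ∈ univ) => sum_le_sum fun k (_ : k ∈ univ) => h j k
  simp only [sum_add_distrib, sum_const, card_univ, nsmul_eq_mul] at hsum
  have hswap : ∑ j, ∑ k, x k j = ∑ j, ∑ k, x j k := sum_comm
  rw [← mul_sum, hswap] at hsum
  linarith

theorem trace_le_d_mul_trace_transMat_general (d : ℕ)
    (Φ : Module.End ℂ (Matrix (Fin d) (Fin d) ℂ)) (h2 : IsTwoPos ⇑Φ)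
    (g : Fin d → (Fin d → ℂ))
    (hON : ∀ i j, star (g i) ⬝ᵥ g j = if i = j then (1 : ℂ) else 0) :
    (LinearMap.trace ℂ (Matrix (Fin d) (Fin d) ℂ) Φ).re ≤
      d * (transMat ⇑Φ g).trace.re := by
  rw [LinearMap.trace_eq_sum_dotProduct_mulVec_vecMulVec Φ g hON, trace]
  simp only [Complex.re_sum]
  have key := Finset.sum_sum_le_card_mul_sum_of_add_le _ _ fun j k => h2.re_cross_add_le (g j) (g k)
  rwa [Fintype.card_fin] at key

/-- For every 2-positive map Φ and every orthonormal basis G of ℂ^d,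
tr(Φ) ≤ d·tr(T_G). -/
theorem trace_le_d_mul_trace_transMat (d : ℕ) (hd : 1 ≤ d)
    (Φ : Module.End ℂ (Matrix (Fin d) (Fin d) ℂ)) (h2 : IsTwoPos ⇑Φ)
    (g : Fin d → (Fin d → ℂ))
    (hON : ∀ i j, star (g i) ⬝ᵥ g j = if i = j then (1 : ℂ) else 0) :
    (LinearMap.trace ℂ (Matrix (Fin d) (Fin d) ℂ) Φ).re ≤
      d * (transMat ⇑Φ g).trace.re :=
  trace_le_d_mul_trace_transMat_general d Φ h2 g hON
end

section
/- The transpose map τ : ℂ^{2×2} → ℂ^{2×2}, τ(X) = Xᵀ, is positive and trace-preserving, yet it violates the 2-positive bound: tr(τ) = 2 > 0 = 2·min Re σ(τ) + (2² − 2). Hence positivity alone does not imply the inequality tr(Φ) ≤ d·min Re σ(Φ) + (d² − d). -/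
open Matrix
open scoped ComplexOrder

/-! The transpose map is an involution, so its eigenvalues are `±1`, and an antisymmetric matrix
such as `E₀₁ - E₁₀` is an eigenvector for `-1`: hence `min Re σ(τ) = -1`. On the basis of matrix
units `τ Eᵢⱼ = Eⱼᵢ`, so its trace counts the diagonal units and equals `d`. For `d = 2` the bound
would demand `2 ≤ 2 · (-1) + 2 = 0`. -/

theorem spectrum.subset_of_sq_eq_one {K A : Type*} [Field K] [Ring A] [Algebra K A] {a : A}
    (ha : a ^ 2 = 1) : spectrum K a ⊆ {1, -1} := by
  nontriviality A
  intro k hk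
  have hk2 : k ^ 2 ∈ spectrum K (1 : A) := ha ▸ spectrum.pow_mem_pow a 2 hk
  rw [spectrum.one_eq] at hk2
  simpa using hk2

namespace Matrix

variable {n : Type*}

theorem transposeLinearEquiv_sq (R : Type*) [CommSemiring R] :
    ((transposeLinearEquiv n n R R).toLinearMap : Module.End R (Matrix n n R)) ^ 2 = 1 :=
  LinearMap.ext transpose_transpose

variable [Fintype n]

theorem stdBasis_repr_apply {m R : Type*} [Fintype m] [Semiring R] (M : Matrix m n R) (i : m)
    (j : n) : (stdBasis R m n).repr M (i, j) = M i j := by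
  simp [stdBasis]

variable [DecidableEq n]

theorem trace_transposeLinearEquiv (R : Type*) [CommRing R] :
    LinearMap.trace R (Matrix n n R) (transposeLinearEquiv n n R R).toLinearMap =
      Fintype.card n := by
  rw [LinearMap.trace_eq_matrix_trace R (stdBasis R n n), Matrix.trace, Fintype.sum_prod_type]
  simp only [diag_apply, LinearMap.toMatrix_apply, stdBasis_repr_apply, LinearEquiv.coe_coe,
    transposeLinearEquiv_apply]
  simp [stdBasis_eq_single, single_apply, eq_comm]

theorem neg_one_mem_spectrum_transposeLinearEquiv (K : Type*) [Field K] [Nontrivial n] :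
    (-1 : K) ∈ spectrum K (transposeLinearEquiv n n K K).toLinearMap := by
  obtain ⟨i, j, hij⟩ := exists_pair_ne n
  rw [← Module.End.hasEigenvalue_iff_mem_spectrum]
  refine Module.End.hasEigenvalue_of_hasEigenvector (x := single i j 1 - single j i 1) ⟨?_, ?_⟩
  · rw [Module.End.mem_eigenspace_iff]
    simp [transpose_single]
  · intro h
    have hij_entry := congrFun (congrFun h i) j
    simp [single, hij, hij.symm] at hij_entry

theorem sInf_re_spectrum_transposeLinearEquiv [Nontrivial n] :
    sInf (Complex.re '' spectrum ℂ (transposeLinearEquiv n n ℂ ℂ).toLinearMap) = -1 := by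
  refine IsLeast.csInf_eq ⟨⟨-1, neg_one_mem_spectrum_transposeLinearEquiv ℂ, by simp⟩, ?_⟩
  rintro _ ⟨μ, hμ, rfl⟩
  rcases spectrum.subset_of_sq_eq_one (transposeLinearEquiv_sq ℂ) hμ with rfl | rfl <;> norm_num

end Matrix

/-- The transpose map on ℂ^{2×2} is positive and trace-preserving but violates the 2-positive
bound: tr(τ) = 2 > 0 = 2·min Re σ(τ) + (2² − 2). -/
theorem transpose_map_violates_bound (τ : Module.End ℂ (Matrix (Fin 2) (Fin 2) ℂ))
    (hτ : ∀ X : Matrix (Fin 2) (Fin 2) ℂ, τ X = Xᵀ) :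
    IsPosMap ⇑τ ∧ IsTracePreserving ⇑τ ∧
    LinearMap.trace ℂ (Matrix (Fin 2) (Fin 2) ℂ) τ = 2 ∧
    2 * sInf (Complex.re '' spectrum ℂ τ) + ((2 : ℝ) ^ 2 - 2) = 0 ∧
    (LinearMap.trace ℂ (Matrix (Fin 2) (Fin 2) ℂ) τ).re >
      2 * sInf (Complex.re '' spectrum ℂ τ) + ((2 : ℝ) ^ 2 - 2) := by
  have hτ_eq : τ = (transposeLinearEquiv (Fin 2) (Fin 2) ℂ ℂ).toLinearMap := LinearMap.ext hτ
  have htrace : LinearMap.trace ℂ (Matrix (Fin 2) (Fin 2) ℂ) τ = 2 := by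
    rw [hτ_eq, trace_transposeLinearEquiv, Fintype.card_fin, Nat.cast_ofNat]
  have hinf : sInf (Complex.re '' spectrum ℂ τ) = -1 := by
    rw [hτ_eq, sInf_re_spectrum_transposeLinearEquiv]
  refine ⟨fun A hA => hτ A ▸ hA.transpose, fun X => hτ X ▸ trace_transpose X, htrace, ?_, ?_⟩
  · rw [hinf]
    norm_num
  · rw [htrace, hinf]
    norm_num
end

section
/- Let Φ : ℂ^{d×d} → ℂ^{d×d} be a linear map, let λ ∈ ℂ, and let X ∈ ℂ^{d×d} be a Hermitian matrix with Φ(X) = λX. Let G = {g₁, …, g_d} be an orthonormal basis of ℂ^d consisting of eigenvectors of X, with X g_j = x_j g_j for real numbers x_j, and let x := (x₁, …, x_d)ᵀ ∈ ℝ^d. Then T_G x = λx, where T_G is the transition matrix of Φ with respect to G. In particular, if X ≠ 0 then λ is an eigenvalue of T_G. -/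
open Matrix
open scoped ComplexOrder

/-- If X is a Hermitian eigenvector of Φ for λ and G is an orthonormal basis of eigenvectors
of X with eigenvalues x, then T_G x = λx; in particular λ is an eigenvalue of T_G if X ≠ 0. -/
theorem transMat_eigenvector (d : ℕ)
    (Φ : Module.End ℂ (Matrix (Fin d) (Fin d) ℂ)) (lam : ℂ)
    (X : Matrix (Fin d) (Fin d) ℂ) (hX : Xᴴ = X) (hEig : Φ X = lam • X)
    (g : Fin d → (Fin d → ℂ))
    (hON : ∀ i j, star (g i) ⬝ᵥ g j = if i = j then (1 : ℂ) else 0)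
    (x : Fin d → ℝ) (hx : ∀ j, X.mulVec (g j) = (x j : ℂ) • g j) :
    (transMat ⇑Φ g).mulVec (fun j => (x j : ℂ)) = lam • (fun j => (x j : ℂ)) ∧
    (X ≠ 0 → ∃ v : Fin d → ℂ, v ≠ 0 ∧ (transMat ⇑Φ g).mulVec v = lam • v) := by
  classical
  set U : Matrix (Fin d) (Fin d) ℂ := Matrix.of (fun i j => g j i) with hUdef
  have hUU : Uᴴ * U = 1 := by
    ext i j
    simpa [Matrix.mul_apply, Matrix.one_apply, dotProduct, hUdef,
      Matrix.conjTranspose_apply] using hON i j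
  have hUUc : U * Uᴴ = 1 := mul_eq_one_comm.mp hUU
  set M : Matrix (Fin d) (Fin d) ℂ :=
    ∑ k, (x k : ℂ) • Matrix.vecMulVec (g k) (star (g k)) with hMdef
  have hMv : ∀ j, M.mulVec (g j) = (x j : ℂ) • g j := by
    intro j
    ext i
    have : M.mulVec (g j) i = ∑ k, (x k : ℂ) * (g k i * (star (g k) ⬝ᵥ g j)) := by
      simp [hMdef, Matrix.mulVec, dotProduct, Matrix.sum_apply, Matrix.vecMulVec_apply,
        Finset.mul_sum, Finset.sum_mul]
      rw [Finset.sum_comm]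
      congr 1; ext k; congr 1; ext l; ring
    rw [this]
    simp [hON, Pi.smul_apply, smul_eq_mul]
  have hXU : X * U = M * U := by
    ext i j
    have h1 : (X * U) i j = X.mulVec (g j) i := by
      simp [Matrix.mul_apply, Matrix.mulVec, dotProduct, hUdef]
    have h2 : (M * U) i j = M.mulVec (g j) i := by
      simp [Matrix.mul_apply, Matrix.mulVec, dotProduct, hUdef]
    rw [h1, h2, hx j, hMv j]
  have hXM : X = M := by
    calc X = X * (U * Uᴴ) := by rw [hUUc, Matrix.mul_one]
    _ = (X * U) * Uᴴ := by rw [Matrix.mul_assoc]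
    _ = (M * U) * Uᴴ := by rw [hXU]
    _ = M * (U * Uᴴ) := by rw [Matrix.mul_assoc]
    _ = M := by rw [hUUc, Matrix.mul_one]
  have hΦM : Φ M = lam • X := by rw [← hXM, hEig]
  have hmain : (transMat ⇑Φ g).mulVec (fun j => (x j : ℂ)) = lam • (fun j => (x j : ℂ)) := by
    ext j
    have hsum : (transMat ⇑Φ g).mulVec (fun k => (x k : ℂ)) j
        = star (g j) ⬝ᵥ (Φ M).mulVec (g j) := by
      have : Φ M = ∑ k, (x k : ℂ) • Φ (Matrix.vecMulVec (g k) (star (g k))) := by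
        rw [hMdef, map_sum]
        simp
      rw [this]
      have e1 : (∑ k, (x k : ℂ) • Φ (Matrix.vecMulVec (g k) (star (g k)))).mulVec (g j)
          = ∑ k, (x k : ℂ) • (Φ (Matrix.vecMulVec (g k) (star (g k)))).mulVec (g j) := by
        ext i
        simp only [Matrix.mulVec, dotProduct, Matrix.sum_apply, Matrix.smul_apply,
          Finset.sum_apply, Pi.smul_apply, smul_eq_mul, Finset.sum_mul]
        rw [Finset.sum_comm]
        simp [Finset.mul_sum, mul_assoc]
      rw [e1]
      have e2 : ∀ (f : Fin d → Fin d → ℂ), star (g j) ⬝ᵥ (∑ k, f k)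
          = ∑ k, star (g j) ⬝ᵥ f k := by
        intro f
        simp only [dotProduct, Finset.sum_apply, Finset.mul_sum]
        rw [Finset.sum_comm]
      rw [e2]
      simp only [transMat, Matrix.mulVec, dotProduct, Matrix.of_apply,
        Pi.smul_apply, smul_eq_mul, Finset.mul_sum]
      refine Finset.sum_congr rfl fun k _ => ?_
      rw [Finset.sum_mul]
      refine Finset.sum_congr rfl fun l _ => ?_
      rw [Finset.sum_mul]
      refine Finset.sum_congr rfl fun m _ => ?_
      ring
    rw [hsum, hΦM]
    have : ((lam • X).mulVec (g j)) = (lam * (x j : ℂ)) • g j := by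
      rw [Matrix.smul_mulVec, hx j, smul_smul]
    rw [this]
    have hjj := hON j j
    simp only [if_pos rfl] at hjj
    simp [dotProduct_smul, hjj, Pi.smul_apply, smul_eq_mul]
  refine ⟨hmain, fun hXne => ?_⟩
  refine ⟨fun j => (x j : ℂ), ?_, hmain⟩
  intro hzero
  apply hXne
  have hx0 : ∀ j, (x j : ℂ) = 0 := fun j => congrFun hzero j
  have : X * U = 0 := by
    ext i j
    have h1 : (X * U) i j = X.mulVec (g j) i := by
      simp [Matrix.mul_apply, Matrix.mulVec, dotProduct, hUdef]
    rw [h1, hx j, hx0 j]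
    simp
  calc X = X * (U * Uᴴ) := by rw [hUUc, Matrix.mul_one]
  _ = (X * U) * Uᴴ := by rw [Matrix.mul_assoc]
  _ = 0 := by rw [this, Matrix.zero_mul]
end

section
/- Let ω ∈ ℂ^{d×d} be positive definite and let Φ : ℂ^{d×d} → ℂ^{d×d} be a 2-positive, trace-preserving linear map with Φ(ω) = ω. Define Φ^#(X) := ω^{1/2} Φ†(ω^{−1/2} X ω^{−1/2}) ω^{1/2}, where Φ† is the Hilbert–Schmidt adjoint of Φ. Then Φ^# is 2-positive, trace-preserving, and satisfies Φ^#(ω) = ω. -/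
open Matrix
open scoped ComplexOrder

/-!
Write Ψ = Φ†. Being 2-positive, Φ commutes with taking adjoints, so the adjointness relation
becomes the bilinear duality tr(Ψ X · Q) = tr(Φ Q · X). Pairing the block matrix of Ψ-images
of a positive semidefinite [[A, B], [C, D]] with a positive semidefinite block matrix P thus
gives the pairing of the Φ-images of the blocks of P with [[A, B], [C, D]], which is
nonnegative; since the positive semidefinite cone is self-dual under the trace pairing, Ψ is
2-positive, and so is its conjugate Φ^# = s Ψ(s⁻¹ · s⁻¹) s. By the same duality,
trace preservation of Φ says Ψ(1) = 1, whence Φ^#(ω) = s Ψ(1) s = ω, and Φ(ω) = ω gives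
tr Φ^#(X) = tr(Φ(ω) s⁻¹ X s⁻¹) = tr X.
-/

namespace Matrix

theorem IsHermitian.fromBlocks_map {n α : Type*} [InvolutiveStar α]
    {f : Matrix n n α → Matrix n n α} (hf : ∀ X, f Xᴴ = (f X)ᴴ) {A B C D : Matrix n n α}
    (h : (Matrix.fromBlocks A B C D).IsHermitian) :
    (Matrix.fromBlocks (f A) (f B) (f C) (f D)).IsHermitian := by
  obtain ⟨hA, hBC, -, hD⟩ := isHermitian_fromBlocks_iff.mp h
  exact IsHermitian.fromBlocks (by rw [IsHermitian, ← hf, hA.eq]) (by rw [← hf, hBC])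
    (by rw [IsHermitian, ← hf, hD.eq])

variable {n α : Type*} [Fintype n]

theorem trace_fromBlocks {m : Type*} [Fintype m] [AddCommMonoid α] (A : Matrix n n α)
    (B : Matrix n m α) (C : Matrix m n α) (D : Matrix m m α) :
    (fromBlocks A B C D).trace = A.trace + D.trace := by
  simp [trace, Fintype.sum_sum_type]

theorem trace_fromBlocks_mul_fromBlocks {m : Type*} [Fintype m] [NonUnitalNonAssocSemiring α]
    (A : Matrix n n α) (B : Matrix n m α) (C : Matrix m n α) (D : Matrix m m α)
    (A' : Matrix n n α) (B' : Matrix n m α) (C' : Matrix m n α) (D' : Matrix m m α) :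
    (fromBlocks A B C D * fromBlocks A' B' C' D').trace =
      (A * A').trace + (B * C').trace + ((C * B').trace + (D * D').trace) := by
  rw [fromBlocks_multiply, trace_fromBlocks, trace_add, trace_add]

theorem dotProduct_mulVec_eq_trace_mul_vecMulVec [CommSemiring α] (M : Matrix n n α)
    (x y : n → α) : y ⬝ᵥ M *ᵥ x = (M * vecMulVec x y).trace := by
  rw [mul_vecMulVec, trace_vecMulVec, dotProduct_comm]

theorem PosSemidef.of_trace_mul_nonneg [CommRing α] [PartialOrder α] [StarRing α]
    [StarOrderedRing α] {M : Matrix n n α} (hM : M.IsHermitian)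
    (h : ∀ P : Matrix n n α, P.PosSemidef → 0 ≤ (M * P).trace) : M.PosSemidef :=
  .of_dotProduct_mulVec_nonneg hM fun x => by
    rw [dotProduct_mulVec_eq_trace_mul_vecMulVec]
    exact h _ (posSemidef_vecMulVec_self_star x)

theorem PosSemidef.trace_mul_nonneg {𝕜 : Type*} [RCLike 𝕜] {A B : Matrix n n 𝕜}
    (hA : A.PosSemidef) (hB : B.PosSemidef) : 0 ≤ (A * B).trace := by
  classical
  open scoped MatrixOrder in
  obtain ⟨C, rfl⟩ := CStarAlgebra.nonneg_iff_eq_star_mul_self.mp hB.nonneg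
  rw [star_eq_conjTranspose, ← mul_assoc, trace_mul_cycle]
  exact (hA.mul_mul_conjTranspose_same C).trace_nonneg

end Matrix

section TraceDuality

variable {n α : Type*} [Fintype n] [CommRing α] {Φ Ψ : Matrix n n α → Matrix n n α}

theorem trace_mul_eq_of_adjoint [StarRing α] (hΦ : ∀ X, Φ Xᴴ = (Φ X)ᴴ)
    (hadj : ∀ A B, ((Φ A)ᴴ * B).trace = (Aᴴ * Ψ B).trace) (X Q : Matrix n n α) :
    (Ψ X * Q).trace = (Φ Q * X).trace := by
  rw [trace_mul_comm, ← conjTranspose_conjTranspose Q, ← hadj, ← hΦ]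

theorem map_conjTranspose_of_trace_duality [StarRing α] (hΦ : ∀ X, Φ Xᴴ = (Φ X)ᴴ)
    (hdual : ∀ X Q, (Ψ X * Q).trace = (Φ Q * X).trace) (X : Matrix n n α) :
    Ψ Xᴴ = (Ψ X)ᴴ := by
  refine ext_iff_trace_mul_right.mpr fun Q => ?_
  calc (Ψ Xᴴ * Q).trace = (Φ Q * Xᴴ).trace := hdual _ _
    _ = star (X * Φ Qᴴ).trace := by
      rw [hΦ, ← trace_conjTranspose, conjTranspose_mul, conjTranspose_conjTranspose]
    _ = star (Ψ X * Qᴴ).trace := by rw [trace_mul_comm, hdual]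
    _ = ((Ψ X)ᴴ * Q).trace := by
      rw [← trace_conjTranspose, conjTranspose_mul, conjTranspose_conjTranspose, trace_mul_comm]

theorem map_one_of_trace_duality [DecidableEq n] (hTP : ∀ X, (Φ X).trace = X.trace)
    (hdual : ∀ X Q, (Ψ X * Q).trace = (Φ Q * X).trace) : Ψ 1 = 1 :=
  ext_iff_trace_mul_right.mpr fun Q => by rw [hdual, mul_one, hTP, one_mul]

end TraceDuality

section TwoPositive

variable {d : ℕ} {Φ Ψ : Matrix (Fin d) (Fin d) ℂ → Matrix (Fin d) (Fin d) ℂ}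

theorem IsTwoPos.comp (hΦ : IsTwoPos Φ) (hΨ : IsTwoPos Ψ) : IsTwoPos (Φ ∘ Ψ) :=
  fun A B C D h => hΦ _ _ _ _ (hΨ A B C D h)

theorem isTwoPos_conjTranspose_mul_mul (a : Matrix (Fin d) (Fin d) ℂ) :
    IsTwoPos fun X => aᴴ * X * a := by
  intro A B C D h
  simpa [fromBlocks_conjTranspose, fromBlocks_multiply] using
    h.conjTranspose_mul_mul_same (fromBlocks a 0 0 a)

theorem IsTwoPos.map_conjTranspose (h : IsTwoPos Φ) (X : Matrix (Fin d) (Fin d) ℂ) :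
    Φ Xᴴ = (Φ X)ᴴ := by
  have hblock : (fromBlocks (1 : Matrix (Fin d) (Fin d) ℂ) X Xᴴ (Xᴴ * X)).PosSemidef := by
    simpa [fromBlocks_conjTranspose, fromBlocks_multiply] using posSemidef_conjTranspose_mul_self
      (fromBlocks 1 X 0 0 : Matrix (Fin d ⊕ Fin d) (Fin d ⊕ Fin d) ℂ)
  exact (isHermitian_fromBlocks_iff.mp (h _ _ _ _ hblock).isHermitian).2.1.symm

theorem IsTwoPos.of_trace_duality (h2 : IsTwoPos Φ)
    (hdual : ∀ X Q, (Ψ X * Q).trace = (Φ Q * X).trace) : IsTwoPos Ψ := by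
  intro A B C D hM
  refine .of_trace_mul_nonneg (hM.isHermitian.fromBlocks_map
    (map_conjTranspose_of_trace_duality h2.map_conjTranspose hdual)) fun P hP => ?_
  rw [← fromBlocks_toBlocks P] at hP ⊢
  rw [trace_fromBlocks_mul_fromBlocks, hdual, hdual, hdual, hdual, add_add_add_comm,
    ← trace_fromBlocks_mul_fromBlocks]
  exact (h2 _ _ _ _ hP).trace_mul_nonneg hM

end TwoPositive

theorem sharp_twoPos_tracePreserving_fixes_general (d : ℕ)
    (ω : Matrix (Fin d) (Fin d) ℂ)
    (s : Matrix (Fin d) (Fin d) ℂ) (hs : s.PosDef) (hss : s * s = ω)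
    (Φ Ψ : Module.End ℂ (Matrix (Fin d) (Fin d) ℂ))
    (h2 : IsTwoPos ⇑Φ) (hTP : IsTracePreserving ⇑Φ) (hfix : Φ ω = ω)
    (hadj : ∀ A B : Matrix (Fin d) (Fin d) ℂ,
      ((Φ A)ᴴ * B).trace = (Aᴴ * Ψ B).trace)
    (Φsharp : Module.End ℂ (Matrix (Fin d) (Fin d) ℂ))
    (hΦsharp : ∀ X : Matrix (Fin d) (Fin d) ℂ,
      Φsharp X = s * Ψ (s⁻¹ * X * s⁻¹) * s) :
    IsTwoPos ⇑Φsharp ∧ IsTracePreserving ⇑Φsharp ∧ Φsharp ω = ω := by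
  have hdual := trace_mul_eq_of_adjoint h2.map_conjTranspose hadj
  have hdet : IsUnit s.det := (isUnit_iff_isUnit_det s).mp hs.isUnit
  have hω_one : s⁻¹ * ω * s⁻¹ = 1 := by
    rw [← hss, nonsing_inv_mul_cancel_left _ _ hdet, mul_nonsing_inv _ hdet]
  have hsharp :
      ⇑Φsharp = (fun X => sᴴ * X * s) ∘ Ψ ∘ (fun X => s⁻¹ᴴ * X * s⁻¹) := by
    funext X
    simp [hΦsharp, hs.isHermitian.eq, hs.isHermitian.inv.eq]
  refine ⟨?_, fun X => ?_, ?_⟩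
  · rw [hsharp]
    exact (isTwoPos_conjTranspose_mul_mul s).comp
      ((h2.of_trace_duality hdual).comp (isTwoPos_conjTranspose_mul_mul s⁻¹))
  · calc (Φsharp X).trace = (Ψ (s⁻¹ * X * s⁻¹) * ω).trace := by
          rw [hΦsharp, trace_mul_cycle, hss, trace_mul_comm]
      _ = (ω * (s⁻¹ * X * s⁻¹)).trace := by rw [hdual, hfix]
      _ = (s⁻¹ * ω * s⁻¹ * X).trace := by
          rw [← mul_assoc, ← mul_assoc, trace_mul_comm, ← mul_assoc, ← mul_assoc]
      _ = X.trace := by rw [hω_one, one_mul]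
  · rw [hΦsharp, hω_one, map_one_of_trace_duality hTP hdual, mul_one, hss]

/-- If Φ is 2-positive, trace-preserving and fixes a positive definite ω, then
Φ^#(X) := ω^{1/2} Φ†(ω^{−1/2} X ω^{−1/2}) ω^{1/2} is 2-positive, trace-preserving and fixes ω;
here s is the positive definite square root of ω and Ψ = Φ† is the Hilbert–Schmidt adjoint. -/
theorem sharp_twoPos_tracePreserving_fixes (d : ℕ)
    (ω : Matrix (Fin d) (Fin d) ℂ) (hω : ω.PosDef)
    (s : Matrix (Fin d) (Fin d) ℂ) (hs : s.PosDef) (hss : s * s = ω)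
    (Φ Ψ : Module.End ℂ (Matrix (Fin d) (Fin d) ℂ))
    (h2 : IsTwoPos ⇑Φ) (hTP : IsTracePreserving ⇑Φ) (hfix : Φ ω = ω)
    (hadj : ∀ A B : Matrix (Fin d) (Fin d) ℂ,
      ((Φ A)ᴴ * B).trace = (Aᴴ * Ψ B).trace)
    (Φsharp : Module.End ℂ (Matrix (Fin d) (Fin d) ℂ))
    (hΦsharp : ∀ X : Matrix (Fin d) (Fin d) ℂ,
      Φsharp X = s * Ψ (s⁻¹ * X * s⁻¹) * s) :
    IsTwoPos ⇑Φsharp ∧ IsTracePreserving ⇑Φsharp ∧ Φsharp ω = ω :=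
  sharp_twoPos_tracePreserving_fixes_general d ω s hs hss Φ Ψ h2 hTP hfix hadj Φsharp hΦsharp
end

section
/- Define the qubit map Φ : ℂ^{2×2} → ℂ^{2×2} by Φ(X) := 4X₁₁·|0⟩⟨0| + σ_x Xᵀ σ_x, where X₁₁ is the (1,1) entry of X, |0⟩⟨0| = diag(1,0), and σ_x = [[0,1],[1,0]]. Then Φ is positive but not 2-positive, tr(Φ) = 6, and nevertheless tr(Φ) ≤ 2·tr(T_G) for every orthonormal basis G of ℂ². Hence the inequality tr(Φ) ≤ d·tr(T_G) for all orthonormal bases G does not characterize 2-positivity. -/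
open Matrix
open scoped ComplexOrder

/-!
Explicitly, Φ(X) = [[4X₀₀ + X₁₁, X₀₁], [X₁₀, X₀₀]]. It is positive because both summands
4X₀₀|0⟩⟨0| and σ_x Xᵀ σ_x are positive semidefinite for positive semidefinite X. Applied blockwise
to the maximally entangled projector [[E₀₀, E₀₁], [E₁₀, E₁₁]] it yields a block matrix with
expectation 4 - 6 = -2 at the vector (e₀, -3e₁), so Φ is not 2-positive. For a unit vector g one
computes ⟨g, Φ(|g⟩⟨g|) g⟩ = 4|g₀|²; the matrix with orthonormal rows g_j is unitary, so its columns
are orthonormal too, Σ_j |g_j₀|² = 1 and tr T_G = 4, whereas tr Φ = 4 + 2 = 6.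
-/

theorem LinearMap.trace_matrix_eq_sum_apply_single {R m n : Type*} [CommRing R]
    [Fintype m] [Fintype n] [DecidableEq m] [DecidableEq n]
    (f : Module.End R (Matrix m n R)) :
    LinearMap.trace R (Matrix m n R) f = ∑ i, ∑ j, f (Matrix.single i j 1) i j := by
  rw [LinearMap.trace_eq_matrix_trace R (stdBasis R m n), Matrix.trace, Fintype.sum_prod_type]
  simp only [LinearMap.toMatrix_apply, stdBasis_eq_single, diag_apply]
  -- the coordinates of `stdBasis` are the matrix entries by definition
  rfl

theorem Matrix.PosSemidef.single_add_conjTranspose_mul_transpose_mul {n : Type*} [Fintype n]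
    [DecidableEq n] {A : Matrix n n ℂ} (hA : A.PosSemidef) {c : ℂ} (hc : 0 ≤ c) (i : n)
    (S : Matrix n n ℂ) : (single i i (c * A i i) + Sᴴ * Aᵀ * S).PosSemidef := by
  refine .add ?_ (hA.transpose.conjTranspose_mul_mul_same S)
  rw [← diagonal_single]
  exact .diagonal (Pi.single_nonneg.mpr (mul_nonneg hc hA.diag_nonneg))

theorem Matrix.posSemidef_fromBlocks_single {R : Type*} [CommRing R] [PartialOrder R] [StarRing R]
    [StarOrderedRing R] :
    (fromBlocks (single 0 0 1) (single 0 1 1) (single 1 0 1) (single 1 1 1) :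
      Matrix (Fin 2 ⊕ Fin 2) (Fin 2 ⊕ Fin 2) R).PosSemidef := by
  convert posSemidef_vecMulVec_self_star
    (Sum.elim (Pi.single 0 1) (Pi.single 1 1) : Fin 2 ⊕ Fin 2 → R)
  ext (i | i) (j | j) <;> fin_cases i <;> fin_cases j <;> simp [vecMulVec_apply]

theorem IsTwoPos.posSemidef_fromBlocks_apply_single
    {Φ : Matrix (Fin 2) (Fin 2) ℂ → Matrix (Fin 2) (Fin 2) ℂ} (h : IsTwoPos Φ) :
    (fromBlocks (Φ (single 0 0 1)) (Φ (single 0 1 1)) (Φ (single 1 0 1))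
      (Φ (single 1 1 1))).PosSemidef :=
  h _ _ _ _ posSemidef_fromBlocks_single

theorem Matrix.sum_star_mul_self_eq_one_of_orthonormal {R n : Type*} [CommRing R] [StarRing R]
    [Fintype n] [DecidableEq n] {g : n → n → R}
    (hg : ∀ i j, star (g i) ⬝ᵥ g j = if i = j then 1 else 0) (k : n) :
    ∑ j, star (g j k) * g j k = 1 := by
  have hrows : of g * (of g)ᴴ = 1 := by
    ext i j
    simpa [mul_apply, one_apply, dotProduct, mul_comm, eq_comm] using hg j i
  have hcols : (of g)ᴴ * of g = 1 := mul_eq_one_comm.mp hrows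
  simpa [mul_apply] using congr_fun (congr_fun hcols k) k

def qubitMap (X : Matrix (Fin 2) (Fin 2) ℂ) : Matrix (Fin 2) (Fin 2) ℂ :=
  !![4 * X 0 0 + X 1 1, X 0 1; X 1 0, X 0 0]

theorem qubitMap_eq (X : Matrix (Fin 2) (Fin 2) ℂ) :
    qubitMap X = (4 * X 0 0) • single 0 0 1 + !![0, 1; 1, 0] * Xᵀ * !![0, 1; 1, 0] := by
  rw [eta_fin_two Xᵀ]
  ext i j
  fin_cases i <;> fin_cases j <;> simp [qubitMap]

theorem isPosMap_qubitMap : IsPosMap qubitMap := by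
  intro A hA
  rw [qubitMap_eq, smul_single, smul_eq_mul, mul_one]
  have hσ : (!![0, 1; 1, 0] : Matrix (Fin 2) (Fin 2) ℂ)ᴴ = !![0, 1; 1, 0] := by
    ext i j
    fin_cases i <;> fin_cases j <;> simp
  simpa only [hσ] using
    hA.single_add_conjTranspose_mul_transpose_mul (c := 4) (by norm_num) 0 !![0, 1; 1, 0]

theorem not_isTwoPos_qubitMap : ¬ IsTwoPos qubitMap := by
  intro h
  have := h.posSemidef_fromBlocks_apply_single.dotProduct_mulVec_nonneg
    (Sum.elim ![1, 0] ![0, -3])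
  norm_num [qubitMap, dotProduct, mulVec, Fin.sum_univ_two, Complex.le_def] at this

theorem trace_qubitMap (Φ : Module.End ℂ (Matrix (Fin 2) (Fin 2) ℂ)) (hΦ : ⇑Φ = qubitMap) :
    LinearMap.trace ℂ (Matrix (Fin 2) (Fin 2) ℂ) Φ = 6 := by
  rw [LinearMap.trace_matrix_eq_sum_apply_single, hΦ]
  norm_num [qubitMap, Fin.sum_univ_two]

theorem star_dotProduct_qubitMap_vecMulVec_mulVec (v : Fin 2 → ℂ) :
    star v ⬝ᵥ qubitMap (vecMulVec v (star v)) *ᵥ v = 4 * (star (v 0) * v 0) * (star v ⬝ᵥ v) := by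
  simp only [qubitMap, dotProduct, mulVec, vecMulVec_apply, Fin.sum_univ_two, Pi.star_apply,
    of_apply, cons_val', cons_val_fin_one, cons_val_zero, cons_val_one]
  ring

theorem trace_transMat_qubitMap {g : Fin 2 → Fin 2 → ℂ}
    (hg : ∀ i j, star (g i) ⬝ᵥ g j = if i = j then (1 : ℂ) else 0) :
    (transMat qubitMap g).trace = 4 := by
  simp only [trace, diag_apply, transMat, of_apply, star_dotProduct_qubitMap_vecMulVec_mulVec,
    hg, if_true, mul_one, ← Finset.mul_sum]
  rw [sum_star_mul_self_eq_one_of_orthonormal hg, mul_one]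

/-- The qubit map Φ(X) = 4X₁₁|0⟩⟨0| + σ_x Xᵀ σ_x is positive but not 2-positive, has tr(Φ) = 6,
and nevertheless satisfies tr(Φ) ≤ 2·tr(T_G) for every orthonormal basis G of ℂ². -/
theorem posMap_not_twoPos_satisfies_lemma (σx : Matrix (Fin 2) (Fin 2) ℂ)
    (hσ : σx = !![0, 1; 1, 0])
    (Φ : Module.End ℂ (Matrix (Fin 2) (Fin 2) ℂ))
    (hΦ : ∀ X : Matrix (Fin 2) (Fin 2) ℂ,
      Φ X = (4 * X 0 0) • Matrix.single (0 : Fin 2) (0 : Fin 2) (1 : ℂ) +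
        σx * Xᵀ * σx) :
    IsPosMap ⇑Φ ∧ ¬ IsTwoPos ⇑Φ ∧
    LinearMap.trace ℂ (Matrix (Fin 2) (Fin 2) ℂ) Φ = 6 ∧
    (∀ g : Fin 2 → (Fin 2 → ℂ),
      (∀ i j, star (g i) ⬝ᵥ g j = if i = j then (1 : ℂ) else 0) →
      (LinearMap.trace ℂ (Matrix (Fin 2) (Fin 2) ℂ) Φ).re ≤
        2 * (transMat ⇑Φ g).trace.re) := by
  have hΦq : ⇑Φ = qubitMap := funext fun X => by rw [hΦ, hσ, qubitMap_eq]
  rw [hΦq, trace_qubitMap Φ hΦq]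
  refine ⟨isPosMap_qubitMap, not_isTwoPos_qubitMap, rfl, fun g hg => ?_⟩
  rw [trace_transMat_qubitMap hg]
  norm_num
end
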